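/- With h_n defined by h_10 = λ^{10} − 9λ^8 + 26λ^6 − 30λ^4 + 13λ^2 − 1, h_11 = λ^{11} − 10λ^9 + 34λ^7 − 48λ^5 + 29λ^3 − 6λ, and h_n = λ·h_{n−1} − h_{n−2} for n ≥ 12: the path polynomial φ(P_5) = λ^5 − 4λ^3 + 3λ divides h_n if and only if n ≡ 5 (mod 6). -/

import Mathlib

open Polynomial

/-- Auxiliary sequence: `hAux m` is the characteristic polynomial of `H (m + 10)`. -/
noncomputable def hAux : ℕ → Polynomial ℤ
  | 0 => X ^ 10 - 9 * X ^ 8 + 26 * X ^ 6 - 30 * X ^ 4 + 13 * X ^ 2 - 1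
  | 1 => X ^ 11 - 10 * X ^ 9 + 34 * X ^ 7 - 48 * X ^ 5 + 29 * X ^ 3 - 6 * X
  | (m + 2) => X * hAux (m + 1) - hAux m

/-- `hPoly n`, for `n ≥ 10`, is the characteristic polynomial of the H-shape tree
`H_n = P_{2,2;n-4}^{2,n-7}`. -/
noncomputable def hPoly (n : ℕ) : Polynomial ℤ := hAux (n - 10)

lemma hAux_add_six (m : ℕ) :
    hAux (m + 6) = (X ^ 5 - 4 * X ^ 3 + 3 * X) * hAux (m + 1)
      - (X ^ 4 - 3 * X ^ 2 + 1) * hAux m := by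
  show hAux (m + 4 + 2) = _
  rw [hAux, show m + 4 + 1 = m + 3 + 2 from rfl, hAux,
    show m + 3 + 1 = m + 2 + 2 from rfl, hAux,
    show m + 2 + 1 = m + 1 + 2 from rfl, hAux,
    show m + 1 + 1 = m + 2 from rfl, hAux]
  ring

lemma dvd_hAux_six (m : ℕ) :
    (X ^ 5 - 4 * X ^ 3 + 3 * X : Polynomial ℤ) ∣ hAux (m + 6) ↔
    (X ^ 5 - 4 * X ^ 3 + 3 * X : Polynomial ℤ) ∣ hAux m := by
  set p : Polynomial ℤ := X ^ 5 - 4 * X ^ 3 + 3 * X with hp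
  constructor
  · intro h
    have h2 : p ∣ (X ^ 4 - 3 * X ^ 2 + 1) * hAux m := by
      have : (X ^ 4 - 3 * X ^ 2 + 1) * hAux m = p * hAux (m + 1) - hAux (m + 6) := by
        rw [hAux_add_six]; ring
      rw [this]
      exact dvd_sub (dvd_mul_right p _) h
    have h3 : p ∣ (X ^ 4 - 3 * X ^ 2 + 1) ^ 2 * hAux m := by
      rw [sq, mul_assoc]; exact h2.mul_left _
    have key : hAux m = (X ^ 4 - 3 * X ^ 2 + 1) ^ 2 * hAux m
        - p * ((X ^ 3 - 2 * X) * hAux m) := by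
      rw [hp]; ring
    rw [key]
    exact dvd_sub h3 (dvd_mul_right p _)
  · intro h
    rw [hAux_add_six]
    exact dvd_sub (dvd_mul_right p _) (h.mul_left _)

lemma not_dvd_of_eval_three (f : Polynomial ℤ)
    (h : ¬ (144 : ℤ) ∣ f.eval 3) :
    ¬ (X ^ 5 - 4 * X ^ 3 + 3 * X : Polynomial ℤ) ∣ f := by
  intro hd
  apply h
  have := Polynomial.eval_dvd (x := (3 : ℤ)) hd
  simpa using this

lemma dvd_hAux_iff (m : ℕ) :
    (X ^ 5 - 4 * X ^ 3 + 3 * X : Polynomial ℤ) ∣ hAux m ↔ m % 6 = 1 := by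
  induction m using Nat.strong_induction_on with
  | _ m ih =>
    match m with
    | 0 =>
      simp only [Nat.zero_mod]
      refine iff_of_false (not_dvd_of_eval_three _ ?_) (by norm_num)
      simp [hAux]
    | 1 =>
      refine iff_of_true ⟨X ^ 6 - 6 * X ^ 4 + 7 * X ^ 2 - 2, ?_⟩ rfl
      simp only [hAux]; ring
    | 2 =>
      refine iff_of_false (not_dvd_of_eval_three _ ?_) (by norm_num)
      simp [hAux]
    | 3 =>
      refine iff_of_false (not_dvd_of_eval_three _ ?_) (by norm_num)
      simp [hAux]
    | 4 =>
      refine iff_of_false (not_dvd_of_eval_three _ ?_) (by norm_num)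
      simp [hAux]
    | 5 =>
      refine iff_of_false (not_dvd_of_eval_three _ ?_) (by norm_num)
      simp [hAux]
    | (m + 6) =>
      rw [dvd_hAux_six, ih m (by omega)]
      omega

theorem pathPoly_five_dvd_hPoly_iff (n : ℕ) (hn : 10 ≤ n) :
    (X ^ 5 - 4 * X ^ 3 + 3 * X) ∣ hPoly n ↔ n % 6 = 5 := by
  unfold hPoly
  rw [dvd_hAux_iff]
  omega
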